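/- For a hook partition $\lambda = (m|n)$ in Frobenius notation, the preimage of $\lambda$ under the operator $T_k$ (acting on the free $\mathbb{Z}$-span of partitions and their negatives) is: $T_k^{-1}(\lambda) = \{\varnothing\}$ if $n = 0$ and $k = m+1$; $T_k^{-1}(\lambda) = \{(0|n-1)\}$ if $n\ge 1$ and $k = m+1$; $T_k^{-1}(\lambda) = \{-(m+1|n-1)\}$ if $n\ge 1$ and $k = 0$; and $T_k^{-1}(\lambda) = \varnothing$ otherwise. -/

import Mathlib

open PowerSeries

noncomputable section

abbrev MvP := MvPolynomial ℕ ℂ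

/-- Exponential of a power series (with zero constant term) over `MvP`,
defined coefficientwise: `coeff n (exp f) = ∑_{m ≤ n} coeff n (f^m) / m!`. -/
def psExp (f : PowerSeries MvP) : PowerSeries MvP :=
  PowerSeries.mk fun n => ∑ m ∈ Finset.range (n + 1),
    MvPolynomial.C ((m.factorial : ℂ)⁻¹) * PowerSeries.coeff n (f ^ m)

/-- The series `∑_{n ≥ 1} q_n z^n`, where `q_n` is the variable `X n`. -/
def genQ : PowerSeries MvP := PowerSeries.mk fun n => if n = 0 then 0 else MvPolynomial.X n

/-- The complete homogeneous polynomials: `∑ h_k z^k = exp (∑_{n≥1} q_n z^n)`. -/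
def hh (k : ℕ) : MvP := PowerSeries.coeff k (psExp genQ)

/-- `h_k` extended to integer indices by `0` for negative `k`. -/
def hZ (k : ℤ) : MvP := if k < 0 then 0 else hh k.toNat

/-- The determinant `det (h_{k_i - i + j})`. -/
def detM (ks : List ℤ) : MvP :=
  Matrix.det (Matrix.of fun i j : Fin ks.length => hZ (ks.get i - ((i : ℕ) : ℤ) + ((j : ℕ) : ℤ)))

/-- The Schur polynomial via the Jacobi–Trudi formula. -/
def schur (l : List ℕ) : MvP := detM (l.map (fun a => (a : ℤ)))

/-- A list of natural numbers is a partition: weakly decreasing with positive parts. -/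
def IsPartition (l : List ℕ) : Prop := l.Chain' (· ≥ ·) ∧ ∀ p ∈ l, 0 < p

/-- The substitution `q_n ↦ q_n - 1/(n zⁿ)`, with `PowerSeries.X` playing the role of `z⁻¹`. -/
def shiftNeg : MvP →+* PowerSeries MvP :=
  MvPolynomial.eval₂Hom ((PowerSeries.C).comp MvPolynomial.C)
    fun n => PowerSeries.C (MvPolynomial.X n)
      - PowerSeries.C (MvPolynomial.C ((n : ℂ)⁻¹)) * PowerSeries.X ^ n

/-- The substitution `q_n ↦ q_n + 1/(n zⁿ)`, with `PowerSeries.X` playing the role of `z⁻¹`. -/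
def shiftPos : MvP →+* PowerSeries MvP :=
  MvPolynomial.eval₂Hom ((PowerSeries.C).comp MvPolynomial.C)
    fun n => PowerSeries.C (MvPolynomial.X n)
      + PowerSeries.C (MvPolynomial.C ((n : ℂ)⁻¹)) * PowerSeries.X ^ n

/-- The list `(μ₁-1, …, μᵢ-1, k+i, μ_{i+1}, …, μ_ℓ)` (1-based indexing of parts). -/
def Papply (k : ℕ) (mu : List ℕ) (i : ℕ) : List ℕ :=
  ((mu.take i).map (fun a => a - 1)) ++ (k + i) :: mu.drop i

/-- The condition `μᵢ > k + i ≥ μ_{i+1}` (with `μ₀ = ∞`, `μ_{ℓ+1} = 0`). -/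
def Pcond (k : ℕ) (mu : List ℕ) (i : ℕ) : Prop :=
  i ≤ mu.length ∧ (i = 0 ∨ k + i < mu.getD (i - 1) 0) ∧ mu.getD i 0 ≤ k + i

/-- The partition with Frobenius coordinates `(m₁,…,m_r | n₁,…,n_r)`, as a list of parts. -/
def frobToList (r : ℕ) (m n : Fin r → ℕ) : List ℕ :=
  List.ofFn fun i : Fin (if h : 0 < r then n ⟨0, h⟩ + 1 else 0) =>
    if hi : (i : ℕ) < r then m ⟨(i : ℕ), hi⟩ + (i : ℕ) + 1
    else ((Finset.univ : Finset (Fin r)).filter fun j => (i : ℕ) + 1 ≤ n j + (j : ℕ) + 1).card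

/-- The hook partition `(m | n) = (m+1, 1ⁿ)`. -/
def hook (m n : ℕ) : List ℕ := (m + 1) :: List.replicate n 1

/-- The Frobenius rank (number of diagonal boxes) of a partition. -/
def frobR (l : List ℕ) : ℕ := ((Finset.range l.length).filter fun i => i + 1 ≤ l.getD i 0).card

/-- The Frobenius arm coordinate `m_i = λ_i - i` (0-based `i`). -/
def frobM (l : List ℕ) (i : ℕ) : ℕ := l.getD i 0 - (i + 1)

/-- The Frobenius leg coordinate `n_i = λ'_i - i` (0-based `i`). -/
def frobN (l : List ℕ) (i : ℕ) : ℕ :=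
  ((Finset.range l.length).filter fun j => i + 1 ≤ l.getD j 0).card - (i + 1)

/-- The Plücker coordinate `π_λ = (-1)^{∑ n_i} det (A_{m_i, n_j})`. -/
def piA (A : ℕ → ℕ → ℂ) (l : List ℕ) : ℂ :=
  (-1 : ℂ) ^ (∑ i ∈ Finset.range (frobR l), frobN l i) *
    Matrix.det (Matrix.of fun i j : Fin (frobR l) => A (frobM l i) (frobN l j))

lemma key8 (k m n i : ℕ) (mu : List ℕ) (hp : IsPartition mu) (hi : 2 ≤ i)
    (hc : Pcond k mu i) (he : Papply k mu i = hook m n) : False := by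
  obtain ⟨hle, hmid, -⟩ := hc
  have hL := congrArg List.length he
  simp [Papply, hook] at hL
  -- lengths
  have hn : mu.length = n := by omega
  have hn1 : 1 ≤ n := by omega
  have h1 : 1 < mu.length := by omega
  have him : i - 1 < mu.length := by omega
  -- element at index 1
  have e1 : (Papply k mu i)[1]'(by
      simp [Papply, hook] at hL ⊢
      omega) = mu[1]'h1 - 1 := by
    unfold Papply
    rw [List.getElem_append_left (by
      simp [List.length_map, List.length_take]; omega)]
    simp [List.getElem_take]
  have e2 : (hook m n)[1]'(by simp [hook]; omega) = 1 := by
    have : n - 1 < n := by omega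
    simp [hook, List.getElem_cons_succ]
  have hmu1 : mu[1]'h1 - 1 = 1 := by
    rw [← e1]
    exact (List.getElem_of_eq he _).trans e2
  -- monotonicity
  have hmono : mu[i-1]'him ≤ mu[1]'h1 := by
    have hpw := List.isChain_iff_pairwise.mp hp.1
    rcases Nat.lt_or_ge 1 (i - 1) with h | h
    · exact List.pairwise_iff_get.mp hpw ⟨1, h1⟩ ⟨i - 1, him⟩ h
    · have hi1 : i - 1 = 1 := by omega
      simp [hi1]
  rcases hmid with h0 | hlt
  · omega
  · rw [List.getD_eq_getElem _ _ him] at hlt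
    omega

/-- the preimage of the hook `(m|n)` under `T_k` on the signed span of partitions:
`{∅}` if `n = 0, k = m+1`; `{(0|n-1)}` if `n ≥ 1, k = m+1`; `{-(m+1|n-1)}` if `n ≥ 1, k = 0`;
empty otherwise.  Positive (resp. negative) preimages correspond to even (resp. odd) `i`. -/
theorem statement8 (k m n : ℕ) :
    (∀ mu : List ℕ, IsPartition mu →
      ((∃ i : ℕ, Pcond k mu i ∧ Papply k mu i = hook m n ∧ Even i) ↔
        ((n = 0 ∧ k = m + 1 ∧ mu = []) ∨ (1 ≤ n ∧ k = m + 1 ∧ mu = hook 0 (n - 1))))) ∧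
    (∀ mu : List ℕ, IsPartition mu →
      ((∃ i : ℕ, Pcond k mu i ∧ Papply k mu i = hook m n ∧ Odd i) ↔
        (1 ≤ n ∧ k = 0 ∧ mu = hook (m + 1) (n - 1)))) := by
  constructor
  · intro mu hp
    constructor
    · rintro ⟨i, hc, he, hev⟩
      have hi0 : i = 0 := by
        by_contra h
        have h2 : 2 ≤ i := by
          rcases hev with ⟨r, hr⟩; omega
        exact key8 k m n i mu hp h2 hc he
      subst hi0
      rw [Papply, hook] at he
      simp at he
      obtain ⟨hk, hmu⟩ := he
      cases n with
      | zero =>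
        left
        simp at hmu
        exact ⟨rfl, by omega, hmu⟩
      | succ p =>
        right
        refine ⟨by omega, by omega, ?_⟩
        simp [hook, hmu, List.replicate_succ]
    · rintro (⟨hn, hk, hmu⟩ | ⟨hn, hk, hmu⟩)
      · subst hmu hn hk
        exact ⟨0, ⟨by simp, Or.inl rfl, by simp [Pcond]⟩, by simp [Papply, hook], Even.zero⟩
      · obtain ⟨p, rfl⟩ : ∃ p, n = p + 1 := ⟨n - 1, by omega⟩
        subst hk hmu
        refine ⟨0, ⟨by simp [hook], Or.inl rfl, ?_⟩, ?_, Even.zero⟩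
        · simp [hook]
        · simp [Papply, hook, List.replicate_succ]
  · intro mu hp
    constructor
    · rintro ⟨i, hc, he, hod⟩
      have hi1 : i = 1 := by
        by_contra h
        have h3 : 2 ≤ i := by
          rcases hod with ⟨r, hr⟩; omega
        exact key8 k m n i mu hp h3 hc he
      subst hi1
      obtain ⟨hle, -, -⟩ := hc
      obtain ⟨a, t, rfl⟩ : ∃ a t, mu = a :: t := by
        cases mu with
        | nil => simp at hle
        | cons a t => exact ⟨a, t, rfl⟩
      rw [Papply, hook] at he
      simp at he
      obtain ⟨ha, he2⟩ := he
      cases n with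
      | zero => simp at he2
      | succ p =>
        rw [List.replicate_succ] at he2
        simp at he2
        obtain ⟨hk1, ht⟩ := he2
        have ha' : 0 < a := hp.2 a (by simp)
        refine ⟨by omega, by omega, ?_⟩
        simp [hook, ht]
        omega
    · rintro ⟨hn, hk, hmu⟩
      obtain ⟨p, rfl⟩ : ∃ p, n = p + 1 := ⟨n - 1, by omega⟩
      subst hk hmu
      refine ⟨1, ⟨by simp [hook], Or.inr ?_, ?_⟩, ?_, odd_one⟩
      · simp [hook]
      · simp [hook]
        cases p <;> simp [List.replicate_succ]
      · simp [Papply, hook, List.replicate_succ]
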